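/- Let E be a phase observable with phase matrix (c_{n,m}) satisfying c_{n,m} ≠ 0 for all n, m ≥ 0. Then the only vector φ with P_n E(X)φ = E(X) P_n φ for all n ∈ ℕ and all Borel X ⊆ [0,2π) is φ = 0. In particular, the canonical phase E_can (c_{n,m} ≡ 1) commutes with the number observable in no nonzero vector state. -/

import Mathlib

/-!
Test the commutation relation on the half circle `X = [0, π)` against the next basis vector:
pairing `P_n E(X) φ = E(X) P_n φ` with `e_{n+1}` gives `0 = ⟪e_n, φ⟫ · c_{n+1,n} · i/π`,
so every coefficient of `φ` vanishes.
-/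

open MeasureTheory Complex

/-- `phaseInt X n m = (1/2π) ∫_X e^{i(n-m)x} dx`. -/
noncomputable def phaseInt (X : Set ℝ) (n m : ℕ) : ℂ :=
  ((1 / (2 * Real.pi) : ℝ) : ℂ) *
    ∫ x in X, Complex.exp (Complex.I * ((n : ℂ) - (m : ℂ)) * (x : ℂ))

lemma phaseInt_Ico_zero_pi_succ (n : ℕ) :
    phaseInt (Set.Ico 0 Real.pi) (n + 1) n = I / Real.pi := by
  have hcast : ((n + 1 : ℕ) : ℂ) - (n : ℂ) = 1 := by push_cast; ring
  have hint : ∫ x in Set.Ico 0 Real.pi, exp (I * (((n + 1 : ℕ) : ℂ) - (n : ℂ)) * (x : ℂ))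
      = ∫ x in (0 : ℝ)..Real.pi, exp (I * (x : ℂ)) := by
    rw [setIntegral_congr_set Ico_ae_eq_Ioc, intervalIntegral.integral_of_le Real.pi_pos.le]
    simp only [hcast, mul_one]
  have hval : ∫ x in (0 : ℝ)..Real.pi, exp (I * (x : ℂ)) = 2 * I := by
    rw [integral_exp_mul_complex I_ne_zero, mul_comm I, exp_pi_mul_I, ofReal_zero, mul_zero,
      exp_zero]
    field_simp
    rw [I_sq]
    ring
  have hpi : (Real.pi : ℂ) ≠ 0 := ofReal_ne_zero.mpr Real.pi_ne_zero
  rw [phaseInt, hint, hval]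
  push_cast
  field_simp

lemma Orthonormal.inner_eq_zero_of_smul_eq_map_smul {H ι : Type*} [NormedAddCommGroup H]
    [InnerProductSpace ℂ H] {e : ι → H} (he : Orthonormal ℂ e) (T : H →ₗ[ℂ] H) {φ : H}
    {n m : ι} (hmn : m ≠ n) (hT : inner ℂ (e m) (T (e n)) ≠ 0)
    (h : inner ℂ (e n) (T φ) • e n = T (inner ℂ (e n) φ • e n)) :
    inner ℂ (e n) φ = 0 := by
  have hpair := congrArg (inner ℂ (e m)) h
  rw [inner_smul_right, he.2 hmn, mul_zero, T.map_smul, inner_smul_right] at hpair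
  exact (mul_eq_zero.mp hpair.symm).resolve_right hT

theorem stmt13 {H : Type*} [NormedAddCommGroup H] [InnerProductSpace ℂ H]
    (e : HilbertBasis ℕ ℂ H)
    (c : ℕ → ℕ → ℂ)
    (hnz : ∀ n m : ℕ, c n m ≠ 0)
    (E : Set ℝ → (H →L[ℂ] H))
    (hE : ∀ X : Set ℝ, MeasurableSet X → X ⊆ Set.Ico 0 (2 * Real.pi) → ∀ n m : ℕ,
      (inner ℂ (e n) (E X (e m)) : ℂ) = c n m * phaseInt X n m)
    (φ : H)
    (hcomm : ∀ (n : ℕ) (X : Set ℝ), MeasurableSet X → X ⊆ Set.Ico 0 (2 * Real.pi) →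
      (inner ℂ (e n) (E X φ) : ℂ) • (e n : H) = E X ((inner ℂ (e n) φ : ℂ) • (e n : H))) :
    φ = 0 := by
  have hsub : Set.Ico 0 Real.pi ⊆ Set.Ico 0 (2 * Real.pi) :=
    Set.Ico_subset_Ico le_rfl (by linarith [Real.pi_pos])
  have hcoef (n : ℕ) : inner ℂ (e n) φ = 0 := by
    refine e.orthonormal.inner_eq_zero_of_smul_eq_map_smul (E (Set.Ico 0 Real.pi))
      (m := n + 1) n.succ_ne_self ?_ (hcomm n _ measurableSet_Ico hsub)
    rw [ContinuousLinearMap.coe_coe, hE _ measurableSet_Ico hsub, phaseInt_Ico_zero_pi_succ]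
    exact mul_ne_zero (hnz _ _) (div_ne_zero I_ne_zero (ofReal_ne_zero.mpr Real.pi_ne_zero))
  apply e.repr.injective
  ext n
  simp [e.repr_apply_apply, hcoef n]
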